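/- arXiv:math/0510177 — 4 statements merged into one kernel-verified Lean document; each statement's English description precedes it below -/
import Mathlib

section
/- The number of proper colorings of the complement of the cycle C_{2r+1} using r+1 colors equals (2r² + 3r + 1) · r! for all r ≥ 2. -/
/-!
A colour class of a proper colouring of the complement of `C_{2r+1}` is a clique of `C_{2r+1}`,
hence a vertex or an edge, as the cycle is triangle-free for `r ≥ 2`. With `2r + 1` vertices and
`r + 1` classes of size at most two, exactly one class is a singleton `{v}` and the others are
edges. These edges form a perfect matching of the path `C_{2r+1} - v`, which is unique, so a
colouring is determined by `v` and a bijection from the `r + 1` blocks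
`{v}, {v + 1, v + 2}, …, {v + 2r - 1, v + 2r}` to the colours:
`(2r + 1) (r + 1)! = (2r² + 3r + 1) r!` colourings.
-/

open Finset SimpleGraph

theorem Fin.val_ofNat_of_lt {n : ℕ} [NeZero n] {a : ℕ} (h : a < n) : (Fin.ofNat n a).val = a :=
  Nat.mod_eq_of_lt h

theorem Fin.val_sub_eq_one_iff {n : ℕ} (hn : 2 ≤ n) {a b : Fin n} :
    (a - b).val = 1 ↔ a.val = b.val + 1 ∨ (a.val = 0 ∧ b.val + 1 = n) := by
  have := b.isLt
  rcases le_or_gt b a with h | h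
  · rw [Fin.sub_val_of_le h]
    rw [Fin.le_def] at h
    omega
  · rw [Fin.coe_sub_iff_lt.mpr h]
    rw [Fin.lt_def] at h
    omega

theorem Fintype.exists_card_fiber_eq_one {α β : Type*} [Fintype α] [Fintype β] [DecidableEq β]
    (f : α → β) (hf : ∀ b, #{a | f a = b} ≤ 2) (hcard : Fintype.card α + 1 = 2 * Fintype.card β) :
    ∃ b, #{a | f a = b} = 1 ∧ ∀ b' ≠ b, #{a | f a = b'} = 2 := by
  have hsum : ∑ b, (2 - #{a | f a = b}) = 1 := by
    have hfib : ∑ b, #{a | f a = b} = Fintype.card α :=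
      (card_eq_sum_card_fiberwise fun a _ => mem_univ (f a)).symm
    have hpair : ∑ b, (2 - #{a | f a = b} + #{a | f a = b}) = 2 * Fintype.card β := by
      rw [Finset.sum_congr rfl fun b _ => Nat.sub_add_cancel (hf b), sum_const, card_univ,
        smul_eq_mul, mul_comm]
    rw [sum_add_distrib, hfib] at hpair
    omega
  obtain ⟨b, -, hb⟩ := exists_ne_zero_of_sum_ne_zero (hsum.trans_ne one_ne_zero)
  rw [← add_sum_erase univ _ (mem_univ b)] at hsum
  have hrest := sum_eq_zero_iff.mp
    (by omega : ∑ b' ∈ univ.erase b, (2 - #{a | f a = b'}) = 0)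
  refine ⟨b, by have := hf b; omega, fun b' hb' => ?_⟩
  have := hrest b' (mem_erase.mpr ⟨hb', mem_univ b'⟩)
  have := hf b'
  omega

/-- In a colouring of the path `0 — 1 — ⋯ — (2N - 1)` whose colour classes are edges, the partner
of `2m` cannot be `2m - 1`, which is already paired with `2m - 2`. -/
theorem apply_two_mul_eq_apply_two_mul_add_one {β : Type*} {h : ℕ → β} {N : ℕ}
    (hadj : ∀ i j, i < 2 * N → j < 2 * N → h i = h j → i = j ∨ i + 1 = j ∨ j + 1 = i)
    (hpartner : ∀ i < 2 * N, ∃ j < 2 * N, j ≠ i ∧ h j = h i) :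
    ∀ m < N, h (2 * m) = h (2 * m + 1) := by
  intro m hm
  induction m with
  | zero =>
    obtain ⟨j, hj, hj0, hjeq⟩ := hpartner 0 (by omega)
    obtain rfl : j = 1 := by have := hadj j 0 hj (by omega) hjeq; omega
    exact hjeq.symm
  | succ m ih =>
    obtain ⟨j, hj, hji, hjeq⟩ := hpartner (2 * (m + 1)) (by omega)
    rcases hadj j _ hj (by omega) hjeq with h | h | h
    · omega
    · obtain rfl : j = 2 * m + 1 := by omega
      have := hadj _ _ (by omega) (by omega) ((ih (by omega)).trans hjeq)
      omega
    · obtain rfl : j = 2 * (m + 1) + 1 := by omega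
      exact hjeq.symm

namespace SimpleGraph

theorem cycleGraph_adj_iff_val {n : ℕ} (hn : 2 ≤ n) {u v : Fin n} :
    (cycleGraph n).Adj u v ↔ u.val = v.val + 1 ∨ v.val = u.val + 1 ∨
      (u.val = 0 ∧ v.val + 1 = n) ∨ (v.val = 0 ∧ u.val + 1 = n) := by
  rw [cycleGraph_adj', Fin.val_sub_eq_one_iff hn, Fin.val_sub_eq_one_iff hn]
  tauto

theorem cycleGraph_adj_sub_right {n : ℕ} [NeZero n] {u v w : Fin n} :
    (cycleGraph n).Adj (u - w) (v - w) ↔ (cycleGraph n).Adj u v := by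
  simp only [cycleGraph_adj', sub_sub_sub_cancel_right]

theorem cycleGraph_cliqueFree_three {n : ℕ} (hn : 4 ≤ n) : (cycleGraph n).CliqueFree 3 := by
  intro s hs
  obtain ⟨a, b, c, hab, hac, hbc, -⟩ := is3Clique_iff.mp hs
  have := a.isLt; have := b.isLt; have := c.isLt
  rw [cycleGraph_adj_iff_val (by omega)] at hab hac hbc
  omega

variable {V α : Type*} {G : SimpleGraph V} {f : V → α}

theorem adj_of_apply_eq_of_compl (hf : ∀ a b, Gᶜ.Adj a b → f a ≠ f b) {a b : V} (hab : a ≠ b)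
    (h : f a = f b) : G.Adj a b :=
  not_not.mp fun hn => hf a b ⟨hab, hn⟩ h

theorem card_fiber_le_two_of_compl [Fintype V] [DecidableEq α] (hG : G.CliqueFree 3)
    (hf : ∀ a b, Gᶜ.Adj a b → f a ≠ f b) (c : α) : #{a | f a = c} ≤ 2 := by
  classical
  by_contra! h
  obtain ⟨x, hx, y, hy, z, hz, hxy, hxz, hyz⟩ := two_lt_card.mp h
  simp only [mem_filter, mem_univ, true_and] at hx hy hz
  refine hG {x, y, z} (is3Clique_triple_iff.mpr ⟨?_, ?_, ?_⟩)
  · exact adj_of_apply_eq_of_compl hf hxy (hx.trans hy.symm)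
  · exact adj_of_apply_eq_of_compl hf hxz (hx.trans hz.symm)
  · exact adj_of_apply_eq_of_compl hf hyz (hy.trans hz.symm)

end SimpleGraph

/-- The colouring giving `τ 0` to `v` and `τ m` to `v + (2m - 1)` and `v + 2m`: its colour classes
are `{v}` and the perfect matching of the path `C_{2r+1} - v`. -/
def matchingColoring (r : ℕ) (v : Fin (2 * r + 1)) (τ : Equiv.Perm (Fin (r + 1)))
    (x : Fin (2 * r + 1)) : Fin (r + 1) :=
  τ ⟨((x - v).val + 1) / 2, by omega⟩

section matchingColoring

variable {r : ℕ} {v : Fin (2 * r + 1)} {τ : Equiv.Perm (Fin (r + 1))}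

theorem matchingColoring_eq_iff {x y : Fin (2 * r + 1)} :
    matchingColoring r v τ x = matchingColoring r v τ y ↔
      ((x - v).val + 1) / 2 = ((y - v).val + 1) / 2 := by
  simp [matchingColoring, τ.injective.eq_iff, Fin.ext_iff]

theorem matchingColoring_add_two_mul (m : Fin (r + 1)) :
    matchingColoring r v τ (v + ⟨2 * m, by omega⟩) = τ m := by
  simp only [matchingColoring, add_sub_cancel_left]
  congr
  omega

theorem matchingColoring_proper (hr : 1 ≤ r) :
    ∀ a b, (cycleGraph (2 * r + 1))ᶜ.Adj a b →
      matchingColoring r v τ a ≠ matchingColoring r v τ b := by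
  intro a b hab h
  rw [matchingColoring_eq_iff] at h
  have hne : (a - v).val ≠ (b - v).val := fun h' => hab.1 (sub_left_injective (Fin.ext h'))
  apply hab.2
  rw [← cycleGraph_adj_sub_right (w := v), cycleGraph_adj_iff_val (by omega)]
  omega

theorem matchingColoring_eq_apply_self_iff {y : Fin (2 * r + 1)} :
    matchingColoring r v τ y = matchingColoring r v τ v ↔ y = v := by
  rw [matchingColoring_eq_iff, sub_self, ← sub_eq_zero (a := y), Fin.ext_iff, Fin.val_zero]
  omega

theorem exists_ne_matchingColoring_eq {x : Fin (2 * r + 1)} (hx : x ≠ v) : ∃ y ≠ x, matchingColoring r v τ y = matchingColoring r v τ x := by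
  have hk : (x - v).val ≠ 0 := fun h => hx (sub_eq_zero.mp (Fin.ext h))
  -- `j` is the other element of the block `{2m - 1, 2m}` containing `k = (x - v).val`,
  -- where `m = (k + 1) / 2`
  set j := 4 * (((x - v).val + 1) / 2) - 1 - (x - v).val
  have hj : ((v + ⟨j, by omega⟩) - v).val = j := by rw [add_sub_cancel_left]
  refine ⟨v + ⟨j, by omega⟩, fun h => ?_, ?_⟩
  · rw [h] at hj
    omega
  · rw [matchingColoring_eq_iff, hj]
    omega

theorem matchingColoring_injective :
    Function.Injective fun p : Fin (2 * r + 1) × Equiv.Perm (Fin (r + 1)) =>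
      matchingColoring r p.1 p.2 := by
  rintro ⟨v, τ⟩ ⟨v', τ'⟩ h
  simp only at h
  obtain rfl : v = v' := by
    by_contra hne
    obtain ⟨y, hy, hyv⟩ := exists_ne_matchingColoring_eq (τ := τ') hne
    rw [← h] at hyv
    exact hy (matchingColoring_eq_apply_self_iff.mp hyv)
  refine Prod.ext rfl (Equiv.ext fun m => ?_)
  simpa only [matchingColoring_add_two_mul] using congrFun h (v + ⟨2 * m, by omega⟩)

end matchingColoring

section properColoring

variable {r : ℕ} {f : Fin (2 * r + 1) → Fin (r + 1)}

theorem exists_singleton_colorClass (hr : 2 ≤ r)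
    (hf : ∀ a b, (cycleGraph (2 * r + 1))ᶜ.Adj a b → f a ≠ f b) :
    ∃ v, (∀ y, f y = f v → y = v) ∧ ∀ x ≠ v, ∃ y ≠ x, f y = f x := by
  obtain ⟨c, hc, hc₂⟩ := Fintype.exists_card_fiber_eq_one f
    (card_fiber_le_two_of_compl (cycleGraph_cliqueFree_three (by omega)) hf)
    (by simp only [Fintype.card_fin]; ring)
  obtain ⟨v, hv⟩ := card_eq_one.mp hc
  have hfib : ∀ y, f y = c ↔ y = v := fun y => by
    simpa using congrArg (y ∈ ·) hv
  refine ⟨v, fun y hy => (hfib y).mp (hy.trans ((hfib v).mpr rfl)), fun x hx => ?_⟩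
  obtain ⟨y, hy, hyx⟩ := exists_mem_ne (s := {a | f a = f x}) (by
    rw [hc₂ _ (fun h => hx ((hfib x).mp h))]; omega) x
  exact ⟨y, hyx, (mem_filter.mp hy).2⟩

theorem val_eq_or_adj_of_apply_eq (hr : 1 ≤ r)
    (hf : ∀ a b, (cycleGraph (2 * r + 1))ᶜ.Adj a b → f a ≠ f b) {x y : Fin (2 * r + 1)}
    (h : f x = f y) :
    x.val = y.val ∨ x.val + 1 = y.val ∨ y.val + 1 = x.val ∨
      (x.val = 0 ∧ y.val = 2 * r) ∨ (y.val = 0 ∧ x.val = 2 * r) := by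
  by_cases hxy : x = y
  · exact Or.inl (congrArg Fin.val hxy)
  · have := adj_of_apply_eq_of_compl hf hxy h
    rw [cycleGraph_adj_iff_val (by omega)] at this
    omega

theorem apply_ofNat_odd_eq_apply_ofNat_even (hr : 1 ≤ r)
    (hf : ∀ a b, (cycleGraph (2 * r + 1))ᶜ.Adj a b → f a ≠ f b) (h0 : ∀ y, f y = f 0 → y = 0)
    (hpartner : ∀ x ≠ 0, ∃ y ≠ x, f y = f x) (m : ℕ) (hm : m < r) :
    f (Fin.ofNat _ (2 * m + 1)) = f (Fin.ofNat _ (2 * m + 1 + 1)) := by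
  refine apply_two_mul_eq_apply_two_mul_add_one (h := fun i => f (Fin.ofNat _ (i + 1)))
    (fun i j hi hj h => ?_) (fun i hi => ?_) m hm
  · have := val_eq_or_adj_of_apply_eq hr hf h
    rw [Fin.val_ofNat_of_lt (by omega), Fin.val_ofNat_of_lt (by omega)] at this
    omega
  · have hx : Fin.ofNat (2 * r + 1) (i + 1) ≠ 0 := fun h => by
      have := Fin.val_ofNat_of_lt (n := 2 * r + 1) (a := i + 1) (by omega)
      rw [h, Fin.val_zero] at this
      omega
    obtain ⟨y, hyx, hy⟩ := hpartner _ hx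
    have hy0 : y.val ≠ 0 := fun h => hx (h0 _ (by rw [← hy, show y = 0 from Fin.ext h]))
    have hy_eq : Fin.ofNat (2 * r + 1) (y.val - 1 + 1) = y :=
      Fin.ext (by rw [Fin.val_ofNat_of_lt (by omega)]; omega)
    refine ⟨y.val - 1, by omega, fun h => hyx ?_, by simp only [hy_eq, hy]⟩
    rw [← hy_eq, h]

theorem exists_matchingColoring_zero_eq (hr : 1 ≤ r)
    (hf : ∀ a b, (cycleGraph (2 * r + 1))ᶜ.Adj a b → f a ≠ f b) (h0 : ∀ y, f y = f 0 → y = 0)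
    (hpartner : ∀ x ≠ 0, ∃ y ≠ x, f y = f x) : ∃ τ, matchingColoring r 0 τ = f := by
  set σ : Fin (r + 1) → Fin (r + 1) := fun m => f (Fin.ofNat _ (2 * m))
  have hσ : ∀ x, σ ⟨(x.val + 1) / 2, by omega⟩ = f x := by
    intro x
    change f (Fin.ofNat _ (2 * ((x.val + 1) / 2))) = f x
    obtain ⟨m, hm | hm⟩ := Nat.even_or_odd' x.val
    · rw [show 2 * ((x.val + 1) / 2) = x.val by omega, Fin.ofNat_val_eq_self]
    · rw [show 2 * ((x.val + 1) / 2) = 2 * m + 1 + 1 by omega,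
        ← apply_ofNat_odd_eq_apply_ofNat_even hr hf h0 hpartner m (by omega), ← hm,
        Fin.ofNat_val_eq_self]
  have hσ_zero : ∀ m, σ m = f 0 ↔ m = 0 := fun m => by
    refine ⟨fun hm => Fin.ext ?_, fun hm => by simp [σ, hm]⟩
    have := congrArg Fin.val (h0 _ hm)
    rw [Fin.val_ofNat_of_lt (by omega), Fin.val_zero] at this
    rw [Fin.val_zero]
    omega
  have hσ_inj : σ.Injective := by
    intro m m' h
    have h₀ : (m : ℕ) = 0 ↔ (m' : ℕ) = 0 := by
      rw [← Fin.val_zero (r + 1), ← Fin.ext_iff, ← Fin.ext_iff, ← hσ_zero, ← hσ_zero, h]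
    have := val_eq_or_adj_of_apply_eq hr hf h
    rw [Fin.val_ofNat_of_lt (by omega), Fin.val_ofNat_of_lt (by omega)] at this
    exact Fin.ext (by omega)
  refine ⟨Equiv.ofBijective σ (Finite.injective_iff_bijective.mp hσ_inj), funext fun x => ?_⟩
  simp only [matchingColoring, sub_zero]
  exact hσ x

theorem exists_matchingColoring_eq (hr : 2 ≤ r)
    (hf : ∀ a b, (cycleGraph (2 * r + 1))ᶜ.Adj a b → f a ≠ f b) :
    ∃ v τ, matchingColoring r v τ = f := by
  obtain ⟨v, hv, hpartner⟩ := exists_singleton_colorClass hr hf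
  have hg : ∀ a b, (cycleGraph (2 * r + 1))ᶜ.Adj a b → f (v + a) ≠ f (v + b) := by
    refine fun a b hab => hf _ _ ⟨by simpa using hab.1, fun h => hab.2 ?_⟩
    rwa [← cycleGraph_adj_sub_right (w := v), add_sub_cancel_left, add_sub_cancel_left] at h
  obtain ⟨τ, hτ⟩ := exists_matchingColoring_zero_eq (f := fun x => f (v + x)) (by omega) hg
    (fun y hy => add_eq_left.mp (hv _ (by simpa using hy)))
    (fun x hx => by
      obtain ⟨y, hyx, hy⟩ := hpartner (v + x) (by simpa using hx)
      exact ⟨y - v, fun h => hyx (by rw [← h, add_sub_cancel]), by simpa using hy⟩)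
  refine ⟨v, τ, funext fun x => ?_⟩
  simpa [matchingColoring] using congrFun hτ (x - v)

end properColoring

/-- The number of proper colorings of the complement of the odd cycle
`C_{2r+1}` using `r+1` colors equals `(2r² + 3r + 1)·r!`, for `r ≥ 2`. -/
theorem card_colorings_compl_oddCycle (r : ℕ) (hr : 2 ≤ r) :
    Nat.card {f : Fin (2 * r + 1) → Fin (r + 1) //
        ∀ a b, (SimpleGraph.cycleGraph (2 * r + 1))ᶜ.Adj a b → f a ≠ f b} =
      (2 * r ^ 2 + 3 * r + 1) * r.factorial := by
  have hbij : Function.Bijective fun p : Fin (2 * r + 1) × Equiv.Perm (Fin (r + 1)) =>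
      (⟨matchingColoring r p.1 p.2, matchingColoring_proper (by omega)⟩ :
        {f : Fin (2 * r + 1) → Fin (r + 1) //
          ∀ a b, (SimpleGraph.cycleGraph (2 * r + 1))ᶜ.Adj a b → f a ≠ f b}) := by
    refine ⟨fun p q h => matchingColoring_injective (congrArg Subtype.val h), fun ⟨f, hf⟩ => ?_⟩
    obtain ⟨v, τ, h⟩ := exists_matchingColoring_eq hr hf
    exact ⟨(v, τ), Subtype.ext h⟩
  rw [← Nat.card_eq_of_bijective _ hbij, Nat.card_prod, Nat.card_perm, Nat.card_fin,
    Nat.card_fin, Nat.factorial_succ]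
  ring
end

section
/- Define f(r,s) for integers r,s ≥ 1 by the recurrence f(r,s) = r·f(r−1,s−1) + (r−1)·f(r,s−1) for s > r ≥ 2, with boundary values f(r,r) = r! − 1, f(1,s) = 0 for s ≥ 1, and f(r,s) = 0 for r > s. Then f(r, r+1) = r!·(r² − r − 2)/2 + 1 for all r ≥ 2. -/
/-- Let `f(r,s)` satisfy `f(r,s) = r·f(r−1,s−1) + (r−1)·f(r,s−1)` for
`s > r ≥ 2`, with `f(r,r) = r! − 1`, `f(1,s) = 0` for `s ≥ 1`, and
`f(r,s) = 0` for `r > s`. Then `f(r,r+1) = r!·(r² − r − 2)/2 + 1` for `r ≥ 2`. -/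
theorem f_r_r_add_one (f : ℕ → ℕ → ℕ)
    (hrec : ∀ r s, 2 ≤ r → r < s → f r s = r * f (r - 1) (s - 1) + (r - 1) * f r (s - 1))
    (hdiag : ∀ r, f r r = r.factorial - 1)
    (hone : ∀ s, 1 ≤ s → f 1 s = 0)
    (hzero : ∀ r s, s < r → f r s = 0) :
    ∀ r, 2 ≤ r → f r (r + 1) = r.factorial * (r ^ 2 - r - 2) / 2 + 1 := by
  have key : ∀ m : ℕ, 2 * f (m + 2) (m + 3) = (m + 2).factorial * (m ^ 2 + 3 * m) + 2 := by
    intro m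
    induction m with
    | zero =>
        have h := hrec 2 3 (by norm_num) (by norm_num)
        norm_num at h
        rw [hone 2 (by norm_num), hdiag 2] at h
        simp [h, Nat.factorial]
    | succ n ih =>
        have h := hrec (n + 3) (n + 4) (by omega) (by omega)
        norm_num at h
        have hd := hdiag (n + 3)
        have hfs : (n + 3).factorial = (n + 3) * (n + 2).factorial := Nat.factorial_succ (n + 2)
        set a := (n + 2).factorial with ha'
        have ha : 1 ≤ (n + 3) * a := by
          have := Nat.factorial_pos (n + 2)
          exact Nat.mul_pos (by omega) this
        have h34 : n + 3 + 1 = n + 4 := by omega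
        rw [h34] at h
        rw [h, hd, hfs]
        set b := f (n + 2) (n + 3) with hb'
        zify [ha] at ih ⊢
        linear_combination (n + 3 : ℤ) * ih
  intro r hr
  obtain ⟨m, rfl⟩ : ∃ m, r = m + 2 := ⟨r - 2, by omega⟩
  have hsq : (m + 2) ^ 2 - (m + 2) - 2 = m ^ 2 + 3 * m := by
    have h : (m + 2) ^ 2 = m ^ 2 + 4 * m + 4 := by ring
    omega
  rw [hsq]
  obtain ⟨t, ht⟩ : 2 ∣ (m + 2).factorial :=
    Nat.dvd_factorial (by norm_num) (by omega)
  have h23 : m + 2 + 1 = m + 3 := by omega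
  rw [h23]
  have hk := key m
  rw [ht] at hk ⊢
  have : 2 * t * (m ^ 2 + 3 * m) / 2 = t * (m ^ 2 + 3 * m) := by
    rw [mul_assoc, Nat.mul_div_cancel_left _ (by norm_num)]
  rw [this]
  have hlin : 2 * t * (m ^ 2 + 3 * m) = 2 * (t * (m ^ 2 + 3 * m)) := by ring
  rw [hlin] at hk
  omega
end

section
/- The number of proper colorings of the complement of the even cycle C_{2r} using r+1 colors equals (2 + r²)·(r+1)! for all r ≥ 2. -/
namespace CColAux

/-- auxiliary index data -/
abbrev D (r : ℕ) := Bool ⊕ Fin r × Fin r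

/-- index assigned to odd vertex `2*i+1` -/
def oidx (r : ℕ) (d : D r) (i : ℕ) : ℕ :=
  match d with
  | .inl false => i
  | .inl true => (i + 1) % r
  | .inr (p, l) =>
      if (p.val + r - i) % r = 0 then r
      else if (p.val + r - i) % r ≤ l.val then (i + 1) % r else i

/-- index assigned to vertex `v` -/
def vidx (r : ℕ) (d : D r) (v : ℕ) : ℕ :=
  if v % 2 = 0 then v / 2 else oidx r d (v / 2)

lemma mod_succ {r i : ℕ} (hi : i < r) : (i + 1) % r = if i + 1 = r then 0 else i + 1 := by
  split
  · next h => rw [h, Nat.mod_self]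
  · exact Nat.mod_eq_of_lt (by omega)

lemma mod_delta {r p i : ℕ} (hp : p < r) (hi : i < r) :
    (p + r - i) % r = if i ≤ p then p - i else p + r - i := by
  split
  · have : p + r - i = r + (p - i) := by omega
    rw [this, Nat.add_mod_left, Nat.mod_eq_of_lt (by omega)]
  · exact Nat.mod_eq_of_lt (by omega)

lemma mod_two {r x : ℕ} (hx : x < 2 * r) : x % r = if x < r then x else x - r := by
  split
  · exact Nat.mod_eq_of_lt ‹_›
  · rw [Nat.mod_eq_sub_mod (by omega)]; exact Nat.mod_eq_of_lt (by omega)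

lemma oidx_le {r : ℕ} (d : D r) {i : ℕ} (hi : i < r) : oidx r d i ≤ r := by
  have hr : 0 < r := by omega
  have h1 : (i + 1) % r < r := Nat.mod_lt _ hr
  rcases d with b | ⟨p, l⟩
  · cases b <;> simp [oidx] <;> omega
  · simp only [oidx]
    split
    · omega
    · split <;> omega

lemma vidx_lt {r : ℕ} (d : D r) {v : ℕ} (hv : v < 2 * r) : vidx r d v < r + 1 := by
  have hr : 0 < r := by omega
  unfold vidx
  split
  · omega
  · have := oidx_le d (i := v / 2) (by omega)
    omega


/-- `oidx` is injective on `[0,r)` -/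
lemma oidx_inj {r : ℕ} (hr : 2 ≤ r) (d : D r) {i j : ℕ} (hi : i < r) (hj : j < r)
    (h : oidx r d i = oidx r d j) : i = j := by
  rcases d with b | ⟨p, l⟩
  · cases b <;> simp only [oidx] at h
    · exact h
    · rw [mod_succ hi, mod_succ hj] at h; split_ifs at h <;> omega
  · simp only [oidx] at h
    rw [mod_delta p.isLt hi, mod_delta p.isLt hj, mod_succ hi, mod_succ hj] at h
    have := p.isLt
    have := l.isLt
    split_ifs at h <;> omega

/-- if an odd index equals an even index -/
lemma oidx_mixed {r : ℕ} (hr : 2 ≤ r) (d : D r) {i j : ℕ} (hi : i < r) (hj : j < r)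
    (h : oidx r d j = i) : i = j ∨ i = (j + 1) % r := by
  rcases d with b | ⟨p, l⟩
  · cases b <;> simp only [oidx] at h
    · exact Or.inl h.symm
    · exact Or.inr h.symm
  · simp only [oidx] at h
    split_ifs at h
    · omega
    · exact Or.inr h.symm
    · exact Or.inl h.symm


lemma cyc_adj {r : ℕ} (hr : 2 ≤ r) {a b : Fin (2 * r)} :
    (SimpleGraph.cycleGraph (2 * r)).Adj a b ↔
      ((a.val + 1) % (2 * r) = b.val ∨ (b.val + 1) % (2 * r) = a.val) := by
  rw [SimpleGraph.cycleGraph_adj']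
  have hsub : ∀ u v : Fin (2 * r), (u - v).val = (u.val + (2 * r) - v.val) % (2 * r) := by
    intro u v
    rw [Fin.sub_def]
    simp only [Fin.val_mk]
    congr 1
    omega
  rw [hsub, hsub, mod_delta a.isLt b.isLt, mod_delta b.isLt a.isLt,
    mod_succ a.isLt, mod_succ b.isLt]
  have := a.isLt; have := b.isLt
  constructor <;> intro h <;> split_ifs at * <;> omega

lemma vidx_inj {r : ℕ} (hr : 2 ≤ r) (d : D r) {a b : ℕ} (ha : a < 2 * r) (hb : b < 2 * r)
    (h : vidx r d a = vidx r d b) :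
    a = b ∨ (a + 1) % (2 * r) = b ∨ (b + 1) % (2 * r) = a := by
  unfold vidx at h
  split_ifs at h with h1 h2 h2
  · omega
  · -- a even, b odd
    rcases oidx_mixed hr d (by omega : a / 2 < r) (by omega : b / 2 < r) h.symm with h3 | h3
    · right; left; rw [mod_succ (by omega : a < 2 * r)]; split <;> omega
    · right; right
      rw [mod_succ (by omega : b < 2 * r)]
      rw [mod_succ (by omega : b / 2 < r)] at h3
      split_ifs at h3 ⊢ <;> omega
  · -- a odd, b even
    rcases oidx_mixed hr d (by omega : b / 2 < r) (by omega : a / 2 < r) h with h3 | h3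
    · right; right; rw [mod_succ (by omega : b < 2 * r)]; split <;> omega
    · right; left
      rw [mod_succ (by omega : a < 2 * r)]
      rw [mod_succ (by omega : a / 2 < r)] at h3
      split_ifs at h3 ⊢ <;> omega
  · left; exact (by omega : a / 2 = b / 2 → a = b) (oidx_inj hr d (by omega) (by omega) h)

def F (r : ℕ) (π : Equiv.Perm (Fin (r + 1))) (d : D r) (v : Fin (2 * r)) : Fin (r + 1) :=
  π ⟨vidx r d v.val, vidx_lt d v.isLt⟩

lemma F_mem {r : ℕ} (hr : 2 ≤ r) (π : Equiv.Perm (Fin (r + 1))) (d : D r) :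
    ∀ a b, (SimpleGraph.cycleGraph (2 * r))ᶜ.Adj a b → F r π d a ≠ F r π d b := by
  intro a b hab hFab
  rw [SimpleGraph.compl_adj] at hab
  obtain ⟨hne, hnadj⟩ := hab
  have h2 : vidx r d a.val = vidx r d b.val := by
    have := π.injective hFab
    simpa [Fin.mk.injEq] using this
  rcases vidx_inj hr d a.isLt b.isLt h2 with h | h | h
  · exact hne (Fin.ext h)
  · exact hnadj ((cyc_adj hr).mpr (Or.inl h))
  · exact hnadj ((cyc_adj hr).mpr (Or.inr h))

lemma vidx_even {r : ℕ} (d : D r) (i : ℕ) : vidx r d (2 * i) = i := by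
  unfold vidx; rw [if_pos (by omega)]; omega

lemma vidx_odd {r : ℕ} (d : D r) (i : ℕ) : vidx r d (2 * i + 1) = oidx r d i := by
  unfold vidx; rw [if_neg (by omega)]; congr 1; omega

lemma F_even {r : ℕ} (π : Equiv.Perm (Fin (r + 1))) (d : D r) {i : ℕ} (hi : i < r) :
    F r π d ⟨2 * i, by omega⟩ = π ⟨i, by omega⟩ := by
  unfold F; congr 1; exact Fin.ext (vidx_even d i)

lemma F_odd {r : ℕ} (π : Equiv.Perm (Fin (r + 1))) (d : D r) {i : ℕ} (hi : i < r) :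
    F r π d ⟨2 * i + 1, by omega⟩ = π ⟨oidx r d i, by have := oidx_le d hi; omega⟩ := by
  unfold F; congr 1; exact Fin.ext (vidx_odd d i)

lemma perm_ext {m : ℕ} {π π' : Equiv.Perm (Fin (m + 1))}
    (h : ∀ x : Fin (m + 1), x.val < m → π x = π' x) : π = π' := by
  apply Equiv.ext
  intro x
  by_cases hx : x.val < m
  · exact h x hx
  · have hxm : x.val = m := by have := x.isLt; omega
    obtain ⟨y, hy⟩ := π'.surjective (π x)
    by_cases hy2 : y.val < m
    · exfalso
      have : π x = π y := by rw [← hy, h y hy2]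
      have := π.injective this
      subst this; omega
    · have : y = x := Fin.ext (by have := y.isLt; omega)
      subst this; exact hy.symm

lemma le_of_oidx_eq {r : ℕ} (hr : 2 ≤ r) (p l l' : Fin r)
    (hpt : ∀ j < r, oidx r (.inr (p, l)) j = oidx r (.inr (p, l')) j) : l.val ≤ l'.val := by
  rcases Nat.eq_zero_or_pos l.val with h0 | h1
  · omega
  · have hp := p.isLt; have hl := l.isLt
    obtain ⟨j, hjr, hδ⟩ : ∃ j < r, (p.val + r - j) % r = l.val := by
      refine ⟨if l.val ≤ p.val then p.val - l.val else p.val + r - l.val, by split <;> omega, ?_⟩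
      rw [mod_delta hp (by split <;> omega)]
      split_ifs <;> omega
    have h2 := hpt j hjr
    simp only [oidx] at h2
    rw [hδ, mod_succ hjr] at h2
    split_ifs at h2 <;> omega

lemma oidx_ext {r : ℕ} (hr : 2 ≤ r) (d d' : D r)
    (hpt : ∀ j < r, oidx r d j = oidx r d' j) : d = d' := by
  have hr0 : 0 < r := by omega
  rcases d with b | ⟨p, l⟩ <;> rcases d' with b' | ⟨p', l'⟩
  · cases b <;> cases b' <;> simp only [oidx] at * <;> first
      | rfl
      | · have := hpt 0 (by omega)
          rw [mod_succ (by omega : 0 < r)] at this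
          split_ifs at this <;> omega
  · exfalso
    have := hpt p'.val p'.isLt
    simp only [oidx] at this
    rw [mod_delta p'.isLt p'.isLt] at this
    have hlt : (p'.val + 1) % r < r := Nat.mod_lt _ hr0
    have := p'.isLt
    cases b <;> simp at this <;> omega
  · exfalso
    have := hpt p.val p.isLt
    simp only [oidx] at this
    rw [mod_delta p.isLt p.isLt] at this
    have hlt : (p.val + 1) % r < r := Nat.mod_lt _ hr0
    have := p.isLt
    cases b' <;> simp at this <;> omega
  · have hpp : p = p' := by
      have h2 := hpt p.val p.isLt
      simp only [oidx] at h2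
      rw [mod_delta p.isLt p.isLt, mod_delta p'.isLt p.isLt] at h2
      have hlt : (p.val + 1) % r < r := Nat.mod_lt _ hr0
      have := p.isLt; have := p'.isLt
      apply Fin.ext
      split_ifs at h2 <;> omega
    subst hpp
    have hll : l = l' := by
      apply Fin.ext
      apply le_antisymm
      · exact le_of_oidx_eq hr p l l' hpt
      · exact le_of_oidx_eq hr p l' l (fun j hj => (hpt j hj).symm)
    rw [hll]

lemma F_inj {r : ℕ} (hr : 2 ≤ r) {π π' : Equiv.Perm (Fin (r + 1))} {d d' : D r}
    (hF : F r π d = F r π' d') : π = π' ∧ d = d' := by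
  have hgg : ∀ x : Fin (r + 1), x.val < r → π x = π' x := by
    intro x hx
    have h2 := congrFun hF ⟨2 * x.val, by omega⟩
    rw [F_even π d hx, F_even π' d' hx] at h2
    have hx2 : (⟨x.val, by omega⟩ : Fin (r + 1)) = x := Fin.ext rfl
    rwa [hx2] at h2
  have hππ : π = π' := perm_ext hgg
  subst hππ
  refine ⟨rfl, oidx_ext hr d d' ?_⟩
  intro j hj
  have h2 := congrFun hF ⟨2 * j + 1, by omega⟩
  rw [F_odd π d hj, F_odd π d' hj] at h2
  have := π.injective h2
  simpa [Fin.mk.injEq] using this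

/-- cyclic successor -/
def sc {r : ℕ} (j : Fin r) : Fin r := ⟨(j.val + 1) % r, Nat.mod_lt _ j.pos⟩
/-- cyclic addition -/
def af {r : ℕ} (j : Fin r) (t : ℕ) : Fin r := ⟨(j.val + t) % r, Nat.mod_lt _ j.pos⟩

lemma af_zero {r : ℕ} (j : Fin r) : af j 0 = j :=
  Fin.ext (by simp [af, Nat.mod_eq_of_lt j.isLt])

lemma af_succ {r : ℕ} (j : Fin r) (t : ℕ) : sc (af j t) = af j (t + 1) :=
  Fin.ext (Nat.mod_add_mod _ _ _)

lemma F_surj {r : ℕ} (hr : 2 ≤ r) (f : Fin (2 * r) → Fin (r + 1))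
    (hf : ∀ a b, (SimpleGraph.cycleGraph (2 * r))ᶜ.Adj a b → f a ≠ f b) :
    ∃ π d, F r π d = f := by
  have hr0 : 0 < r := by omega
  have key : ∀ a b : Fin (2 * r), f a = f b →
      a.val = b.val ∨ (a.val + 1) % (2 * r) = b.val ∨ (b.val + 1) % (2 * r) = a.val := by
    intro a b hab
    by_contra hcon
    push_neg at hcon
    obtain ⟨h1, h2, h3⟩ := hcon
    exact hf a b ((SimpleGraph.compl_adj _ a b).mpr
      ⟨fun he => h1 (congrArg Fin.val he), fun hadj => ((cyc_adj hr).mp hadj).elim h2 h3⟩) hab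
  have key' : ∀ (x y : ℕ) (hx : x < 2 * r) (hy : y < 2 * r),
      f ⟨x, hx⟩ = f ⟨y, hy⟩ → x = y ∨ (x + 1) % (2 * r) = y ∨ (y + 1) % (2 * r) = x :=
    fun x y hx hy hxy => key ⟨x, hx⟩ ⟨y, hy⟩ hxy
  obtain ⟨g, hg⟩ : ∃ g : Fin r → Fin (r + 1),
      ∀ i : Fin r, g i = f ⟨2 * i.val, by have := i.isLt; omega⟩ := ⟨_, fun _ => rfl⟩
  obtain ⟨h, hh⟩ : ∃ h : Fin r → Fin (r + 1),
      ∀ i : Fin r, h i = f ⟨2 * i.val + 1, by have := i.isLt; omega⟩ := ⟨_, fun _ => rfl⟩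
  have ginj : Function.Injective g := by
    intro i j hij
    have hi := i.isLt; have hj := j.isLt
    rw [hg, hg] at hij
    have hk := key' _ _ (by omega) (by omega) hij
    rw [mod_succ (show 2 * i.val < 2 * r by omega),
      mod_succ (show 2 * j.val < 2 * r by omega)] at hk
    apply Fin.ext
    rcases hk with hk | hk | hk
    · omega
    · split_ifs at hk <;> omega
    · split_ifs at hk <;> omega
  have hinj : Function.Injective h := by
    intro i j hij
    have hi := i.isLt; have hj := j.isLt
    rw [hh, hh] at hij
    have hk := key' _ _ (by omega) (by omega) hij
    rw [mod_succ (show 2 * i.val + 1 < 2 * r by omega),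
      mod_succ (show 2 * j.val + 1 < 2 * r by omega)] at hk
    apply Fin.ext
    rcases hk with hk | hk | hk
    · omega
    · split_ifs at hk <;> omega
    · split_ifs at hk <;> omega
  -- missing color
  obtain ⟨c, hc⟩ : ∃ c : Fin (r + 1), ∀ i, g i ≠ c := by
    by_contra hcon
    push_neg at hcon
    have hsurj : Function.Surjective g := fun b => hcon b
    have := Fintype.card_le_of_surjective g hsurj
    simp only [Fintype.card_fin] at this
    omega
  -- the permutation
  obtain ⟨π₀, hπlt, hπlast⟩ : ∃ π₀ : Fin (r + 1) → Fin (r + 1),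
      (∀ (x : Fin (r + 1)) (hx : x.val < r), π₀ x = g ⟨x.val, hx⟩) ∧
      (∀ x : Fin (r + 1), ¬x.val < r → π₀ x = c) :=
    ⟨fun x => if hx : x.val < r then g ⟨x.val, hx⟩ else c,
      fun x hx => dif_pos hx, fun x hx => dif_neg hx⟩
  have hπ₀inj : Function.Injective π₀ := by
    intro x y hxy
    by_cases hx : x.val < r <;> by_cases hy : y.val < r
    · rw [hπlt x hx, hπlt y hy] at hxy
      have h2 := ginj hxy
      simp only [Fin.mk.injEq] at h2
      exact Fin.ext h2
    · rw [hπlt x hx, hπlast y hy] at hxy; exact absurd hxy (hc _)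
    · rw [hπlast x hx, hπlt y hy] at hxy; exact absurd hxy.symm (hc _)
    · apply Fin.ext; have := x.isLt; have := y.isLt; omega
  have hπ₀bij : Function.Bijective π₀ := Finite.injective_iff_bijective.mp hπ₀inj
  set π : Equiv.Perm (Fin (r + 1)) := Equiv.ofBijective π₀ hπ₀bij with hπdef
  have hπ : ∀ x, π x = π₀ x := fun x => rfl
  have hrange : ∀ x : Fin (r + 1), x = c ∨ ∃ i : Fin r, g i = x := by
    intro x
    obtain ⟨y, hy⟩ := hπ₀bij.surjective x
    by_cases hyr : y.val < r
    · exact Or.inr ⟨⟨y.val, hyr⟩, by rw [← hy, hπlt y hyr]⟩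
    · exact Or.inl (by rw [← hy, hπlast y hyr])
  -- the structure of h
  have hmix : ∀ j : Fin r, h j = c ∨ h j = g j ∨ h j = g (sc j) := by
    intro j
    rcases hrange (h j) with h1 | ⟨m, hm⟩
    · exact Or.inl h1
    · right
      have hj := j.isLt; have hmlt := m.isLt
      have hm2 := hm
      rw [hg, hh] at hm2
      have hk := key' _ _ (by omega) (by omega) hm2
      rw [mod_succ (show 2 * m.val < 2 * r by omega),
        mod_succ (show 2 * j.val + 1 < 2 * r by omega)] at hk
      by_cases hmj : m.val = j.val
      · left; rw [← hm]; congr 1; exact (Fin.ext hmj)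
      · right; rw [← hm]; congr 1
        apply Fin.ext
        show m.val = (j.val + 1) % r
        rw [mod_succ hj]
        rcases hk with hk | hk | hk
        · omega
        · split_ifs at hk ⊢ <;> omega
        · split_ifs at hk ⊢ <;> omega
  have hscne : ∀ j : Fin r, sc j ≠ j := by
    intro j hj
    have := congrArg Fin.val hj
    have hjlt := j.isLt
    rw [show (sc j).val = (j.val + 1) % r from rfl, mod_succ hjlt] at this
    split_ifs at this <;> omega
  have prop : ∀ j : Fin r, h j = g (sc j) → h (sc j) ≠ c → h (sc j) = g (sc (sc j)) := by
    intro j hj hne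
    rcases hmix (sc j) with h1 | h1 | h1
    · exact absurd h1 hne
    · exfalso
      have h2 : h j = h (sc j) := by rw [hj, h1]
      exact hscne j (hinj h2).symm
    · exact h1
  -- final evaluation helper
  have feval : ∀ (d : D r), (∀ i : Fin r, π₀ ⟨oidx r d i.val, by have := oidx_le d i.isLt; omega⟩ = h i) →
      F r π d = f := by
    intro d hodd
    funext v
    have hv := v.isLt
    obtain ⟨i, hi, hcase⟩ : ∃ i, i < r ∧ (v.val = 2 * i ∨ v.val = 2 * i + 1) :=
      ⟨v.val / 2, by omega, by omega⟩
    rcases hcase with he | he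
    · have hv2 : v = ⟨2 * i, by omega⟩ := Fin.ext he
      rw [hv2, F_even π d hi, hπ, hπlt _ (show (⟨i, by omega⟩ : Fin (r+1)).val < r from hi)]
      rw [hg]
    · have hv2 : v = ⟨2 * i + 1, by omega⟩ := Fin.ext he
      rw [hv2, F_odd π d hi, hπ, hodd ⟨i, hi⟩]
      rw [hh]
  by_cases hcase : ∃ i₀, h i₀ = c
  · -- case B : the color c is used at odd position i₀
    obtain ⟨i₀, hi₀⟩ := hcase
    have huniq : ∀ j, h j = c → j = i₀ := fun j hj => hinj (hj.trans hi₀.symm)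
    obtain ⟨δ, hδ⟩ : ∃ δ : Fin r → ℕ, ∀ j, δ j = (i₀.val + r - j.val) % r := ⟨_, fun _ => rfl⟩
    have hδlt : ∀ j, δ j < r := fun j => by rw [hδ]; exact Nat.mod_lt _ hr0
    have hδ0 : ∀ j, δ j = 0 ↔ j = i₀ := by
      intro j
      rw [hδ, mod_delta i₀.isLt j.isLt]
      have := i₀.isLt; have := j.isLt
      constructor
      · intro hz; apply Fin.ext; split_ifs at hz <;> omega
      · intro hz; subst hz; split_ifs <;> omega
    set S : Finset (Fin r) := Finset.univ.filter (fun j => j ≠ i₀ ∧ h j = g (sc j)) with hS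
    set ℓ : ℕ := S.sup δ with hℓ
    have hℓr : ℓ < r := by
      rcases S.eq_empty_or_nonempty with he | hne
      · rw [hℓ, he]; simpa using hr0
      · exact (Finset.sup_lt_iff (show (⊥ : ℕ) < r from hr0)).mpr fun j _ => hδlt j
    have hforward : ∀ j : Fin r, j ≠ i₀ → h j = g (sc j) → δ j ≤ ℓ := by
      intro j hj1 hj2
      exact Finset.le_sup (by simp [hS, hj1, hj2])
    have hbackward : ∀ j : Fin r, j ≠ i₀ → δ j ≤ ℓ → h j = g (sc j) := by
      intro j hj1 hj2
      have hδj1 : 1 ≤ δ j := by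
        rcases Nat.eq_zero_or_pos (δ j) with h0 | h1
        · exact absurd ((hδ0 j).mp h0) hj1
        · omega
      rcases S.eq_empty_or_nonempty with he | hne
      · rw [hℓ, he] at hj2; simp at hj2; omega
      · obtain ⟨js, hjs, hsup⟩ := Finset.exists_mem_eq_sup S hne δ
        rw [hS, Finset.mem_filter] at hjs
        obtain ⟨-, hjs1, hjs2⟩ := hjs
        have hδjs : δ js = ℓ := hsup.symm
        have hδaf : ∀ t, t ≤ ℓ → δ (af js t) = ℓ - t := by
          intro t ht
          have h1 : (js.val + t) % r = if js.val + t < r then js.val + t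
              else js.val + t - r := mod_two (by have := js.isLt; omega)
          have h2 : (af js t).val = (js.val + t) % r := rfl
          rw [hδ, h2, h1]
          rw [hδ, mod_delta i₀.isLt js.isLt] at hδjs
          have := i₀.isLt; have := js.isLt
          rw [mod_delta i₀.isLt (by split_ifs <;> omega)]
          split_ifs at hδjs ⊢ <;> omega
        have chain : ∀ t, t < ℓ → h (af js t) = g (sc (af js t)) := by
          intro t
          induction t with
          | zero => intro _; rw [af_zero]; exact hjs2
          | succ t ih =>
            intro ht
            have hprev := ih (by omega)
            have hne2 : h (sc (af js t)) ≠ c := by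
              intro hcc
              have := huniq _ hcc
              rw [af_succ] at this
              have := (hδ0 _).mpr this
              rw [hδaf (t + 1) (by omega)] at this
              omega
            have h9 := prop _ hprev hne2
            rw [af_succ] at h9
            exact h9
        -- j = af js (ℓ - δ j)
        have hjeq : af js (ℓ - δ j) = j := by
          apply Fin.ext
          have hδjv : δ j = if j.val ≤ i₀.val then i₀.val - j.val else i₀.val + r - j.val := by
            rw [hδ, mod_delta i₀.isLt j.isLt]
          have hδjsv : δ js = if js.val ≤ i₀.val then i₀.val - js.val
              else i₀.val + r - js.val := by
            rw [hδ, mod_delta i₀.isLt js.isLt]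
          have h2 : (af js (ℓ - δ j)).val = (js.val + (ℓ - δ j)) % r := rfl
          have := i₀.isLt; have := js.isLt; have := j.isLt
          rw [h2, mod_two (show js.val + (ℓ - δ j) < 2 * r by omega)]
          split_ifs at hδjv hδjsv ⊢ <;> omega
        rcases Nat.eq_or_lt_of_le hj2 with heq | hlt
        · rw [← hjeq] at hj1 ⊢
          have : ℓ - δ j = 0 := by omega
          rw [this, af_zero] at hj1 ⊢
          exact hjs2
        · have := chain (ℓ - δ j) (by omega)
          rwa [hjeq] at this
    have hother : ∀ j : Fin r, j ≠ i₀ → ¬δ j ≤ ℓ → h j = g j := by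
      intro j hj1 hj2
      rcases hmix j with h1 | h1 | h1
      · exact absurd (huniq j h1) hj1
      · exact h1
      · exact absurd (hforward j hj1 h1) hj2
    refine ⟨π, Sum.inr (i₀, ⟨ℓ, hℓr⟩), feval _ ?_⟩
    intro i
    have hδi : (i₀.val + r - i.val) % r = δ i := (hδ i).symm
    suffices hgen : ∀ (m : ℕ) (hm : m < r + 1),
        oidx r (Sum.inr (i₀, ⟨ℓ, hℓr⟩)) i.val = m → π₀ ⟨m, hm⟩ = h i from hgen _ _ rfl
    intro m hm hme
    simp only [oidx] at hme
    by_cases hz : (i₀.val + r - i.val) % r = 0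
    · rw [if_pos hz] at hme
      subst hme
      rw [hπlast _ (show ¬(r < r) by omega)]
      have h1 : i = i₀ := (hδ0 i).mp (by omega)
      rw [h1, hi₀]
    · rw [if_neg hz] at hme
      by_cases hle : (i₀.val + r - i.val) % r ≤ ℓ
      · rw [if_pos hle] at hme
        have h1 : h i = g (sc i) := hbackward i (fun hhh => hz (by rw [hδi, (hδ0 i).mpr hhh]))
          (by omega)
        have hmr : m < r := by rw [← hme]; exact Nat.mod_lt _ hr0
        rw [hπlt _ (show (⟨m, hm⟩ : Fin (r + 1)).val < r from hmr), h1]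
        congr 1
        exact Fin.ext hme.symm
      · rw [if_neg hle] at hme
        have h1 : h i = g i := hother i (fun hhh => hz (by rw [hδi, (hδ0 i).mpr hhh])) (by omega)
        have hmr : m < r := by rw [← hme]; exact i.isLt
        rw [hπlt _ (show (⟨m, hm⟩ : Fin (r + 1)).val < r from hmr), h1]
        congr 1
        exact Fin.ext hme.symm
  · -- case A : c unused on odd positions
    have hAll : ∀ j, h j ≠ c := fun j hj => hcase ⟨j, hj⟩
    have hmix2 : ∀ j : Fin r, h j = g j ∨ h j = g (sc j) := by
      intro j
      rcases hmix j with h1 | h1 | h1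
      · exact absurd h1 (hAll j)
      · exact Or.inl h1
      · exact Or.inr h1
    by_cases hid : ∀ j, h j = g j
    · refine ⟨π, Sum.inl false, feval _ ?_⟩
      intro i
      rw [hπlt _ (show ((⟨oidx r (Sum.inl false) i.val, by have := oidx_le (Sum.inl false : D r) i.isLt; omega⟩ : Fin (r + 1))).val < r from i.isLt), hid]
      congr 1
    · push_neg at hid
      obtain ⟨j₀, hj₀⟩ := hid
      have hj₀2 : h j₀ = g (sc j₀) := (hmix2 j₀).resolve_left hj₀
      have chain : ∀ t, h (af j₀ t) = g (sc (af j₀ t)) := by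
        intro t
        induction t with
        | zero => rw [af_zero]; exact hj₀2
        | succ t ih =>
          have h9 := prop _ ih (hAll _)
          rw [af_succ] at h9
          exact h9
      have hall : ∀ j, h j = g (sc j) := by
        intro j
        have h1 : af j₀ (j.val + r - j₀.val) = j := by
          apply Fin.ext
          have h2 : (af j₀ (j.val + r - j₀.val)).val = (j₀.val + (j.val + r - j₀.val)) % r := rfl
          rw [h2]
          have := j₀.isLt; have := j.isLt
          rw [show j₀.val + (j.val + r - j₀.val) = j.val + r by omega,
            Nat.add_mod_right, Nat.mod_eq_of_lt (by omega)]
        have := chain (j.val + r - j₀.val)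
        rwa [h1] at this
      refine ⟨π, Sum.inl true, feval _ ?_⟩
      intro i
      suffices hgen : ∀ (m : ℕ) (hm : m < r + 1),
          oidx r (Sum.inl true) i.val = m → π₀ ⟨m, hm⟩ = h i from hgen _ _ rfl
      intro m hm hme
      simp only [oidx] at hme
      have hmr : m < r := by rw [← hme]; exact Nat.mod_lt _ hr0
      rw [hπlt _ (show (⟨m, hm⟩ : Fin (r + 1)).val < r from hmr), hall]
      congr 1
      exact Fin.ext hme.symm

end CColAux

/-- The number of proper colorings of the complement of the even cycle
`C_{2r}` using `r+1` colors equals `(2 + r²)·(r+1)!`, for `r ≥ 2`. -/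
theorem card_colorings_compl_evenCycle (r : ℕ) (hr : 2 ≤ r) :
    Nat.card {f : Fin (2 * r) → Fin (r + 1) //
        ∀ a b, (SimpleGraph.cycleGraph (2 * r))ᶜ.Adj a b → f a ≠ f b} =
      (2 + r ^ 2) * (r + 1).factorial := by
  classical
  have hbij : Function.Bijective
      (fun pd : Equiv.Perm (Fin (r + 1)) × CColAux.D r =>
        (⟨CColAux.F r pd.1 pd.2, CColAux.F_mem hr pd.1 pd.2⟩ :
          {f : Fin (2 * r) → Fin (r + 1) //
            ∀ a b, (SimpleGraph.cycleGraph (2 * r))ᶜ.Adj a b → f a ≠ f b})) := by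
    constructor
    · rintro ⟨π, d⟩ ⟨π', d'⟩ hpd
      simp only [Subtype.mk.injEq] at hpd
      obtain ⟨h1, h2⟩ := CColAux.F_inj hr hpd
      simp [h1, h2]
    · rintro ⟨f, hf⟩
      obtain ⟨π, d, hFd⟩ := CColAux.F_surj hr f hf
      exact ⟨(π, d), Subtype.ext hFd⟩
  have e := Equiv.ofBijective _ hbij
  rw [← Nat.card_congr e]
  rw [Nat.card_eq_fintype_card, Fintype.card_prod, Fintype.card_perm, Fintype.card_sum,
    Fintype.card_bool, Fintype.card_prod]
  simp only [Fintype.card_fin]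
  ring
end

section
/- Every maximal cell of the Hom complex Hom(C̄_{2r+1}, K_{r+1}) contains each color in exactly two coordinates; consequently every cell of Hom(C̄_{2r+1}, K_{r+1}) has dimension at most 2(r+1) − (2r+1) = 1. -/
open Finset

/-- `A` is a cell of `Hom(C̄_{2r+1}, K_{r+1})`: a vector of nonempty color
sets that are pairwise disjoint along edges of the complement of the odd
cycle. -/
def IsCellOdd (r : ℕ) (A : Fin (2 * r + 1) → Finset (Fin (r + 1))) : Prop :=
  (∀ i, (A i).Nonempty) ∧
    ∀ i j, (SimpleGraph.cycleGraph (2 * r + 1))ᶜ.Adj i j → Disjoint (A i) (A j)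

/-- Every maximal cell of `Hom(C̄_{2r+1}, K_{r+1})` contains each color in
exactly two coordinates; consequently every cell has dimension
`Σᵢ(|Aᵢ| − 1) ≤ 2(r+1) − (2r+1) = 1`. -/
theorem homOddCycle_maximal_cells (r : ℕ) (hr : 2 ≤ r) :
    (∀ A, IsCellOdd r A →
      (∀ B, IsCellOdd r B → (∀ i, A i ⊆ B i) → A = B) →
      ∀ c : Fin (r + 1), (univ.filter fun i => c ∈ A i).card = 2) ∧
    (∀ A, IsCellOdd r A → ∑ i, ((A i).card - 1) ≤ 1) := by
  have hn5 : 5 ≤ 2 * r + 1 := by omega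
  -- value of Fin subtraction
  have hsubval : ∀ u v : Fin (2 * r + 1),
      (u - v).val = 1 ↔ (u.val = v.val + 1 ∨ (v.val = 2 * r ∧ u.val = 0)) := by
    intro u v
    have hu := u.isLt
    have hv := v.isLt
    rw [Fin.sub_def]
    simp only
    rcases Nat.lt_or_ge ((2 * r + 1 - v.val) + u.val) (2 * r + 1) with h | h
    · rw [Nat.mod_eq_of_lt h]; omega
    · rw [Nat.mod_eq_sub_mod h, Nat.mod_eq_of_lt (by omega)]; omega
  -- adjacency in the cycle, in terms of values
  have hadjval : ∀ u v : Fin (2 * r + 1), (SimpleGraph.cycleGraph (2 * r + 1)).Adj u v →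
      (u.val = v.val + 1 ∨ (v.val = 2 * r ∧ u.val = 0)) ∨
      (v.val = u.val + 1 ∨ (u.val = 2 * r ∧ v.val = 0)) := by
    intro u v h
    rw [SimpleGraph.cycleGraph_adj'] at h
    rcases h with h | h
    · exact Or.inl ((hsubval u v).mp h)
    · exact Or.inr ((hsubval v u).mp h)
  -- the cycle has no triangles
  have notri : ∀ a b c : Fin (2 * r + 1),
      (SimpleGraph.cycleGraph (2 * r + 1)).Adj a b →
      (SimpleGraph.cycleGraph (2 * r + 1)).Adj b c →
      (SimpleGraph.cycleGraph (2 * r + 1)).Adj a c → False := by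
    intro a b c hab hbc hac
    have h1 := hadjval a b hab
    have h2 := hadjval b c hbc
    have h3 := hadjval a c hac
    have := a.isLt; have := b.isLt; have := c.isLt
    omega
  -- successor adjacency
  have hadjsucc : ∀ i : Fin (2 * r + 1),
      (SimpleGraph.cycleGraph (2 * r + 1)).Adj (i + 1) i := by
    intro i
    rw [SimpleGraph.cycleGraph_adj']
    left
    have : i + 1 - i = (1 : Fin (2 * r + 1)) := add_sub_cancel_left i 1
    rw [this, Fin.val_one', Nat.mod_eq_of_lt (by omega)]
  have hnesucc : ∀ i : Fin (2 * r + 1), i + 1 ≠ i := by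
    intro i h
    have h2 : (SimpleGraph.cycleGraph (2 * r + 1)).Adj (i + 1) i := hadjsucc i
    rw [h] at h2
    exact (SimpleGraph.irrefl _) h2
  -- each color occurs in at most two coordinates
  have count2 : ∀ A, IsCellOdd r A → ∀ c : Fin (r + 1),
      (univ.filter fun i => c ∈ A i).card ≤ 2 := by
    intro A hA c
    by_contra h
    push_neg at h
    obtain ⟨a, ha, b, hb, d, hd, hab, had, hbd⟩ := Finset.two_lt_card.mp h
    simp only [mem_filter, mem_univ, true_and] at ha hb hd
    have key : ∀ x y : Fin (2 * r + 1), x ≠ y → c ∈ A x → c ∈ A y →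
        (SimpleGraph.cycleGraph (2 * r + 1)).Adj x y := by
      intro x y hxy hx hy
      by_contra hadj
      have := hA.2 x y ((SimpleGraph.compl_adj _ _ _).mpr ⟨hxy, hadj⟩)
      exact (Finset.disjoint_left.mp this hx) hy
    exact notri a b d (key a b hab ha hb) (key b d hbd hb hd) (key a d had ha hd)
  -- maximal cells: each color in exactly two coordinates
  have maximal : ∀ A, IsCellOdd r A →
      (∀ B, IsCellOdd r B → (∀ i, A i ⊆ B i) → A = B) →
      ∀ c : Fin (r + 1), (univ.filter fun i => c ∈ A i).card = 2 := by
    intro A hA hmax c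
    have hle := count2 A hA c
    by_contra hne
    have hle1 : (univ.filter fun i => c ∈ A i).card ≤ 1 := by omega
    obtain ⟨i, key⟩ : ∃ i : Fin (2 * r + 1), ∀ k, c ∈ A k → k = i := by
      rcases (univ.filter fun i => c ∈ A i).eq_empty_or_nonempty with h | ⟨i, hi⟩
      · refine ⟨0, fun k hk => absurd ?_ (Finset.notMem_empty k)⟩
        rw [← h]; simp [hk]
      · exact ⟨i, fun k hk =>
          Finset.card_le_one.mp hle1 k (by simp [hk]) i hi⟩
    set j := i + 1 with hj
    have hcj : c ∉ A j := fun h => hnesucc i (key j h)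
    set B := Function.update A j (insert c (A j)) with hB
    have hBj : B j = insert c (A j) := Function.update_self _ _ _
    have hBk : ∀ k, k ≠ j → B k = A k := fun k hk => Function.update_of_ne hk _ _
    have hBcell : IsCellOdd r B := by
      constructor
      · intro k
        by_cases hk : k = j
        · subst hk; rw [hBj]; exact insert_nonempty _ _
        · rw [hBk k hk]; exact hA.1 k
      · intro k l hadj
        obtain ⟨hkl, hnadj⟩ := (SimpleGraph.compl_adj _ _ _).mp hadj
        have hdisj := hA.2 k l hadj
        have hnoc : ∀ x, (SimpleGraph.cycleGraph (2 * r + 1))ᶜ.Adj j x → c ∉ A x := by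
          intro x hx hcx
          have hxi : x = i := key x hcx
          rw [hxi] at hx
          exact ((SimpleGraph.compl_adj _ _ _).mp hx).2 (hadjsucc i)
        by_cases hk : k = j <;> by_cases hl : l = j
        · exact absurd (hk ▸ hl ▸ hkl) (by simp)
        · subst hk
          rw [hBj, hBk l hl, Finset.disjoint_insert_left]
          exact ⟨hnoc l hadj, hdisj⟩
        · subst hl
          rw [hBj, hBk k hk, Finset.disjoint_insert_right]
          exact ⟨hnoc k hadj.symm, hdisj⟩
        · rw [hBk k hk, hBk l hl]; exact hdisj
    have hsub : ∀ k, A k ⊆ B k := by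
      intro k
      by_cases hk : k = j
      · subst hk; rw [hBj]; exact subset_insert _ _
      · rw [hBk k hk]
    have hAB := hmax B hBcell hsub
    have : c ∈ A j := by
      have h1 : A j = B j := congrFun hAB j
      rw [h1, hBj]; exact mem_insert_self _ _
    exact hcj this
  refine ⟨maximal, ?_⟩
  intro A hA
  have hsum : ∑ i, (A i).card = ∑ c : Fin (r + 1), (univ.filter fun i => c ∈ A i).card := by
    calc ∑ i, (A i).card
        = ∑ i, ∑ c : Fin (r + 1), if c ∈ A i then 1 else 0 := by
          refine Finset.sum_congr rfl fun i _ => ?_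
          rw [← Finset.card_filter]
          congr 1
          exact (Finset.filter_univ_mem _).symm
      _ = ∑ c : Fin (r + 1), ∑ i, if c ∈ A i then 1 else 0 := Finset.sum_comm
      _ = ∑ c : Fin (r + 1), (univ.filter fun i => c ∈ A i).card := by
          refine Finset.sum_congr rfl fun c _ => ?_
          rw [Finset.card_filter]
  have hub : ∑ i, (A i).card ≤ 2 * (r + 1) := by
    rw [hsum]
    calc ∑ c : Fin (r + 1), (univ.filter fun i => c ∈ A i).card
        ≤ ∑ _c : Fin (r + 1), 2 := Finset.sum_le_sum fun c _ => count2 A hA c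
      _ = 2 * (r + 1) := by simp [mul_comm]
  have hone : ∀ i, 1 ≤ (A i).card := fun i => Finset.card_pos.mpr (hA.1 i)
  have hkey : ∑ i, ((A i).card - 1) + (2 * r + 1) = ∑ i, (A i).card := by
    calc ∑ i, ((A i).card - 1) + (2 * r + 1)
        = ∑ i, ((A i).card - 1) + ∑ _i : Fin (2 * r + 1), 1 := by simp
      _ = ∑ i, (((A i).card - 1) + 1) := (Finset.sum_add_distrib).symm
      _ = ∑ i, (A i).card := by
          refine Finset.sum_congr rfl fun i _ => ?_
          exact Nat.sub_add_cancel (hone i)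
  omega
end
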